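/- Let I ⊆ ℝ be an open interval, let γ : I → ℝ² be a C¹ curve parametrized by arc length with unit tangent τ(s) = γ'(s), and let n : I → ℝ² be a differentiable map of unit vectors with τ(s) = (−n₂(s), n₁(s)) and n'(s) = κ(s) τ(s) for a function κ : I → ℝ. Let v : ℝ² → ℝ² be C¹ with v(γ(s)) · n(s) = 0 for all s ∈ I, and let D(v)(x) = ½(Dv(x) + Dv(x)ᵀ) be the rate-of-strain tensor. Then for all s ∈ I, (D(v)(γ(s)) n(s)) · τ(s) = ½ ω(v)(γ(s)) − κ(s) (v(γ(s)) · τ(s)). -/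

import Mathlib

/-!
Differentiating the tangency condition `v(γ) ⬝ n = 0` along the curve gives
`(Dv τ) ⬝ n = -κ (v ⬝ τ)`. What is left of `(D(v) n) ⬝ τ` is the antisymmetric part
`½ ((Dv n) ⬝ τ - (Dv τ) ⬝ n)`, which for `τ` the rotation of `n` by `π/2` equals `½ |n|² ω(v)`.
-/

noncomputable section

/-- Dot product on `ℝ²` (realized as `Fin 2 → ℝ`). -/
def dot2 (u w : Fin 2 → ℝ) : ℝ := u 0 * w 0 + u 1 * w 1

/-- Vorticity `ω(v)(x) = ∂₁v²(x) − ∂₂v¹(x)` (components indexed `0,1`). -/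
def vort (v : (Fin 2 → ℝ) → Fin 2 → ℝ) (x : Fin 2 → ℝ) : ℝ :=
  fderiv ℝ v x (Pi.single 0 1) 1 - fderiv ℝ v x (Pi.single 1 1) 0

/-- Rate-of-strain tensor `D(v)(x) = ½(Dv(x) + Dv(x)ᵀ)`, acting on a vector `u`. -/
def strain (v : (Fin 2 → ℝ) → Fin 2 → ℝ) (x u : Fin 2 → ℝ) : Fin 2 → ℝ :=
  fun i => (1 / 2) * (fderiv ℝ v x u i + dot2 (fun j => fderiv ℝ v x (Pi.single i 1) j) u)

lemma LinearMap.apply_eq_fin_two (A : (Fin 2 → ℝ) →ₗ[ℝ] Fin 2 → ℝ) (u : Fin 2 → ℝ) :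
    A u = u 0 • A (Pi.single 0 1) + u 1 • A (Pi.single 1 1) := by
  conv_lhs => rw [show u = u 0 • Pi.single 0 1 + u 1 • Pi.single 1 1 by
    ext j; fin_cases j <;> simp]
  rw [map_add, map_smul, map_smul]

lemma dot2_transpose_apply (A : (Fin 2 → ℝ) →ₗ[ℝ] Fin 2 → ℝ) (u w : Fin 2 → ℝ) :
    dot2 (fun i => dot2 (fun j => A (Pi.single i 1) j) u) w = dot2 (A w) u := by
  simp only [dot2, A.apply_eq_fin_two w, Pi.add_apply, Pi.smul_apply, smul_eq_mul]
  ring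

lemma dot2_strain (v : (Fin 2 → ℝ) → Fin 2 → ℝ) (x u w : Fin 2 → ℝ) :
    dot2 (strain v x u) w = (1 / 2) * (dot2 (fderiv ℝ v x u) w + dot2 (fderiv ℝ v x w) u) := by
  have h := dot2_transpose_apply (fderiv ℝ v x).toLinearMap u w
  simp only [ContinuousLinearMap.coe_coe] at h
  simp only [strain, dot2] at h ⊢
  linear_combination (1 / 2) * h

lemma dot2_apply_rot_sub (A : (Fin 2 → ℝ) →ₗ[ℝ] Fin 2 → ℝ) (u : Fin 2 → ℝ) :
    dot2 (A u) ![-u 1, u 0] - dot2 (A ![-u 1, u 0]) u =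
      dot2 u u * (A (Pi.single 0 1) 1 - A (Pi.single 1 1) 0) := by
  simp only [dot2, A.apply_eq_fin_two u, A.apply_eq_fin_two ![-u 1, u 0], Pi.add_apply,
    Pi.smul_apply, smul_eq_mul, Matrix.cons_val_zero, Matrix.cons_val_one]
  ring

lemma HasDerivAt.dot2 {f g : ℝ → Fin 2 → ℝ} {f' g' : Fin 2 → ℝ} {s : ℝ}
    (hf : HasDerivAt f f' s) (hg : HasDerivAt g g' s) :
    HasDerivAt (fun t => dot2 (f t) (g t)) (dot2 f' (g s) + dot2 (f s) g') s := by
  have hfi := hasDerivAt_pi.1 hf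
  have hgi := hasDerivAt_pi.1 hg
  unfold _root_.dot2
  exact (((hfi 0).mul (hgi 0)).add ((hfi 1).mul (hgi 1))).congr_deriv (by ring)

theorem strain_n_dot_tau_general (a b : ℝ) (γ τ n : ℝ → Fin 2 → ℝ) (κ : ℝ → ℝ)
    (v : (Fin 2 → ℝ) → Fin 2 → ℝ)
    (hγ : ∀ s ∈ Set.Ioo a b, HasDerivAt γ (τ s) s)
    (hnunit : ∀ s ∈ Set.Ioo a b, dot2 (n s) (n s) = 1)
    (hτdef : ∀ s ∈ Set.Ioo a b, τ s = ![-(n s 1), n s 0])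
    (hn' : ∀ s ∈ Set.Ioo a b, HasDerivAt n (κ s • τ s) s)
    (hv : ContDiff ℝ 1 v)
    (htang : ∀ s ∈ Set.Ioo a b, dot2 (v (γ s)) (n s) = 0) :
    ∀ s ∈ Set.Ioo a b,
      dot2 (strain v (γ s) (n s)) (τ s) =
        (1 / 2) * vort v (γ s) - κ s * dot2 (v (γ s)) (τ s) := by
  intro s hs
  set A := fderiv ℝ v (γ s)
  have hderiv : HasDerivAt (fun t => dot2 (v (γ t)) (n t))
      (dot2 (A (τ s)) (n s) + dot2 (v (γ s)) (κ s • τ s)) s :=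
    ((hv.differentiable one_ne_zero _).hasFDerivAt.comp_hasDerivAt s (hγ s hs)).dot2 (hn' s hs)
  have hconst : HasDerivAt (fun t => dot2 (v (γ t)) (n t)) 0 s :=
    (hasDerivAt_const s 0).congr_of_eventuallyEq
      (Filter.eventually_of_mem (isOpen_Ioo.mem_nhds hs) htang)
  have hderiv_eq_zero := hderiv.unique hconst
  have hrot := dot2_apply_rot_sub A.toLinearMap (n s)
  rw [ContinuousLinearMap.coe_coe, ← hτdef s hs] at hrot
  have hunit := hnunit s hs
  rw [dot2_strain, vort]
  simp only [dot2, Pi.smul_apply, smul_eq_mul] at hderiv_eq_zero hrot hunit ⊢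
  linear_combination (1 / 2) * hrot + hderiv_eq_zero
    + (1 / 2) * (A (Pi.single 0 1) 1 - A (Pi.single 1 1) 0) * hunit

/-- Along a `C¹` arc-length curve `γ` in the open interval `(a,b)`, with unit normal `n`,
positively-oriented tangent `τ = (−n₂, n₁) = γ'` and `n' = κ τ`, if a `C¹` vector field `v`
satisfies `v(γ(s)) ⬝ n(s) = 0`, then
`(D(v)(γ(s)) n(s)) ⬝ τ(s) = ½ ω(v)(γ(s)) − κ(s) (v(γ(s)) ⬝ τ(s))`. -/
theorem strain_n_dot_tau (a b : ℝ) (γ τ n : ℝ → Fin 2 → ℝ) (κ : ℝ → ℝ)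
    (v : (Fin 2 → ℝ) → Fin 2 → ℝ)
    (hγ : ∀ s ∈ Set.Ioo a b, HasDerivAt γ (τ s) s)
    (hτcont : ContinuousOn τ (Set.Ioo a b))
    (hτunit : ∀ s ∈ Set.Ioo a b, dot2 (τ s) (τ s) = 1)
    (hnunit : ∀ s ∈ Set.Ioo a b, dot2 (n s) (n s) = 1)
    (hτdef : ∀ s ∈ Set.Ioo a b, τ s = ![-(n s 1), n s 0])
    (hn' : ∀ s ∈ Set.Ioo a b, HasDerivAt n (κ s • τ s) s)
    (hv : ContDiff ℝ 1 v)
    (htang : ∀ s ∈ Set.Ioo a b, dot2 (v (γ s)) (n s) = 0) :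
    ∀ s ∈ Set.Ioo a b,
      dot2 (strain v (γ s) (n s)) (τ s) =
        (1 / 2) * vort v (γ s) - κ s * dot2 (v (γ s)) (τ s) :=
  strain_n_dot_tau_general a b γ τ n κ v hγ hnunit hτdef hn' hv htang

end
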